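/- Let B be a commutative ring, let B₀ ⊆ B and A ⊆ B be subrings, and let R : B → B be an additive map satisfying: R(x) ∈ B₀ for all x ∈ B; R(b) = b for all b ∈ B₀; R(b·x) = b·R(x) for all b ∈ B₀ and x ∈ B; and R(a) ∈ A for all a ∈ A. Then every element f ∈ B₀ that is integral over A is integral over the subring A ∩ B₀. -/

import Mathlib

/-- Reynolds operator argument: if `R : B → B` is an additive `B₀`-linear
projection onto the subring `B₀` which preserves the subring `A`, then every
element of `B₀` that is integral over `A` is integral over `A ∩ B₀`. -/
theorem integral_over_inter_of_reynolds
    {B : Type*} [CommRing B] (B₀ A : Subring B) (R : B → B)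
    (hadd : ∀ x y : B, R (x + y) = R x + R y)
    (hmem : ∀ x : B, R x ∈ B₀)
    (hproj : ∀ b ∈ B₀, R b = b)
    (hlin : ∀ b ∈ B₀, ∀ x : B, R (b * x) = b * R x)
    (hA : ∀ a ∈ A, R a ∈ A)
    (f : B) (hf : f ∈ B₀)
    (hint : ∃ p : Polynomial B, p.Monic ∧ (∀ i, p.coeff i ∈ A) ∧
      Polynomial.eval f p = 0) :
    ∃ p : Polynomial B, p.Monic ∧ (∀ i, p.coeff i ∈ A ⊓ B₀) ∧
      Polynomial.eval f p = 0 := by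
  obtain ⟨p, hmon, hcoeff, heval⟩ := hint
  have hR0 : R 0 = 0 := by
    have := hproj 0 (zero_mem B₀); simpa using this
  set Rh : B →+ B := AddMonoidHom.mk' R hadd with hRh
  have hc : ∀ i, (Polynomial.ofFinsupp (AddMonoidAlgebra.ofCoeff (p.toFinsupp.coeff.mapRange R hR0))).coeff i = R (p.coeff i) := by
    intro i
    rw [Polynomial.coeff_ofFinsupp, Finsupp.mapRange_apply]
    rfl
  refine ⟨Polynomial.ofFinsupp (AddMonoidAlgebra.ofCoeff (p.toFinsupp.coeff.mapRange R hR0)), ?_, ?_, ?_⟩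
  · have hdeg : (Polynomial.ofFinsupp (AddMonoidAlgebra.ofCoeff (p.toFinsupp.coeff.mapRange R hR0))).natDegree ≤ p.natDegree := by
      apply Polynomial.natDegree_le_iff_coeff_eq_zero.2
      intro i hi
      rw [hc, Polynomial.coeff_eq_zero_of_natDegree_lt hi, hR0]
    apply Polynomial.monic_of_natDegree_le_of_coeff_eq_one p.natDegree hdeg
    rw [hc, show p.coeff p.natDegree = 1 from hmon, hproj 1 (one_mem B₀)]
  · intro i
    rw [hc]
    exact ⟨hA _ (hcoeff i), hmem _⟩
  · have hc : ∀ i, (Polynomial.ofFinsupp (AddMonoidAlgebra.ofCoeff (p.toFinsupp.coeff.mapRange R hR0))).coeff i = R (p.coeff i) := by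
      intro i; simp [Polynomial.coeff, Finsupp.mapRange_apply]
    have hsupp : (Polynomial.ofFinsupp (AddMonoidAlgebra.ofCoeff (p.toFinsupp.coeff.mapRange R hR0))).support ⊆ p.support := by
      intro i hi
      simp only [Polynomial.mem_support_iff] at hi ⊢
      intro h; apply hi; rw [hc, h, hR0]
    rw [Polynomial.eval_eq_sum_range' (lt_of_le_of_lt
      (Polynomial.natDegree_le_iff_coeff_eq_zero.2 (fun i hi => by

        rw [hc, Polynomial.coeff_eq_zero_of_natDegree_lt hi, hR0])) (Nat.lt_succ_self _))]
    have heval' : ∑ i ∈ Finset.range (p.natDegree + 1), p.coeff i * f ^ i = 0 := by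
      rw [← Polynomial.eval_eq_sum_range, heval]
    calc ∑ i ∈ Finset.range (p.natDegree + 1),
          (Polynomial.ofFinsupp (AddMonoidAlgebra.ofCoeff (p.toFinsupp.coeff.mapRange R hR0))).coeff i * f ^ i
        = ∑ i ∈ Finset.range (p.natDegree + 1), R (p.coeff i * f ^ i) := by
          refine Finset.sum_congr rfl fun i _ => ?_
          rw [hc, mul_comm, mul_comm (p.coeff i) (f ^ i), hlin _ (pow_mem hf i)]
      _ = R (∑ i ∈ Finset.range (p.natDegree + 1), p.coeff i * f ^ i) := by
          rw [show (R : B → B) = Rh from rfl, map_sum]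
      _ = 0 := by rw [heval', hR0]
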